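/- arXiv:2312.02818 — 2 statements merged into one kernel-verified Lean document; each statement's English description precedes it below -/
import Mathlib

section
/- If 0 < δ < 1/2 and δ < x₀ < 1 − δ, then 2(1 − x₀ − δ) < ln((1 − x₀)/δ). -/
lemma aux_log_lower (t : ℝ) (ht : 1 < t) : 2 * (t - 1) / (t + 1) < Real.log t := by
  have key : StrictMonoOn (fun x : ℝ => Real.log x - 2 * (x - 1) / (x + 1)) (Set.Ici 1) := by
    apply strictMonoOn_of_deriv_pos (convex_Ici 1)
    · apply ContinuousOn.sub
      · exact Real.continuousOn_log.mono (by intro x hx; simp at hx ⊢; linarith)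
      · apply ContinuousOn.div
        · fun_prop
        · fun_prop
        · intro x hx; simp at hx; intro h; linarith
    · intro x hx
      rw [interior_Ici] at hx
      simp only [Set.mem_Ioi] at hx
      have hx0 : (0:ℝ) < x := by linarith
      have hne : x + 1 ≠ 0 := by positivity
      have hd : HasDerivAt (fun x : ℝ => Real.log x - 2 * (x - 1) / (x + 1))
          (x⁻¹ - (2 * (x + 1) - 2 * (x - 1) * 1) / (x + 1) ^ 2) x := by
        have h1 : HasDerivAt (fun x : ℝ => 2 * (x - 1)) 2 x := by
          simpa using (((hasDerivAt_id x).sub_const 1).const_mul (2:ℝ))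
        have h2 : HasDerivAt (fun x : ℝ => x + 1) 1 x := by
          simpa using (hasDerivAt_id x).add_const (1:ℝ)
        exact (Real.hasDerivAt_log (ne_of_gt hx0)).sub (h1.div h2 hne)
      rw [hd.deriv]
      rw [sub_pos, inv_eq_one_div, div_lt_div_iff₀ (by positivity) hx0]
      nlinarith [sq_nonneg (x - 1)]
  have h01 : (1:ℝ) ∈ Set.Ici (1:ℝ) := Set.mem_Ici.mpr (le_refl 1)
  have h0t : t ∈ Set.Ici (1:ℝ) := le_of_lt ht
  have := key h01 h0t ht
  simp only [Real.log_one] at this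
  linarith [this]

theorem stmt_2 (x₀ δ : ℝ) (hδ0 : 0 < δ) (hδ : δ < 1/2) (h1 : δ < x₀) (h2 : x₀ < 1 - δ) :
    2 * (1 - x₀ - δ) < Real.log ((1 - x₀) / δ) := by
  set a := 1 - x₀ with ha
  have haδ : δ < a := by simp [ha]; linarith
  have ht : 1 < a / δ := (one_lt_div hδ0).mpr haδ
  have hlog := aux_log_lower (a / δ) ht
  have heq : 2 * (a / δ - 1) / (a / δ + 1) = 2 * (a - δ) / (a + δ) := by
    field_simp
  rw [heq] at hlog
  have hsum : a + δ < 1 := by simp [ha]; linarith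
  have hpos : 0 < a + δ := by linarith [hδ0.le, haδ]
  have : 2 * (a - δ) ≤ 2 * (a - δ) / (a + δ) := by
    rw [le_div_iff₀ hpos]
    nlinarith
  linarith
end

section
/- If 0 < x₀ < 1/2 and x₀ < δ < 1 − x₀, then 2(1 − x₀ − δ) < ln((1 − δ)/x₀). -/
lemma log_gt_tanh_bound {t : ℝ} (ht : 1 < t) : 2 * (t - 1) / (t + 1) < Real.log t := by
  have hmono : StrictMonoOn (fun x : ℝ => Real.log x - 2 * (x - 1) / (x + 1)) (Set.Ici 1) := by
    apply strictMonoOn_of_deriv_pos (convex_Ici 1)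
    · apply ContinuousOn.sub
      · exact Real.continuousOn_log.mono (fun x hx => by
          simp only [Set.mem_Ici] at hx; simp; linarith)
      · apply ContinuousOn.div
        · fun_prop
        · fun_prop
        · intro x hx; simp only [Set.mem_Ici] at hx; linarith
    · intro x hx
      rw [interior_Ici, Set.mem_Ioi] at hx
      have hx0 : x ≠ 0 := by linarith
      have hx1 : x + 1 ≠ 0 := by linarith
      have hd : HasDerivAt (fun x : ℝ => Real.log x - 2 * (x - 1) / (x + 1))
          (x⁻¹ - (2 * (x + 1) - 2 * (x - 1) * 1) / (x + 1) ^ 2) x := by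
        have h1 : HasDerivAt (fun x : ℝ => 2 * (x - 1)) 2 x := by
          simpa using (((hasDerivAt_id x).sub_const 1).const_mul 2)
        have h2 : HasDerivAt (fun x : ℝ => x + 1) 1 x := (hasDerivAt_id x).add_const 1
        exact (Real.hasDerivAt_log hx0).sub (h1.div h2 hx1)
      rw [hd.deriv]
      rw [inv_eq_one_div, div_sub_div _ _ hx0 (pow_ne_zero 2 hx1)]
      apply div_pos
      · nlinarith
      · positivity
  have h := hmono (Set.self_mem_Ici) (Set.mem_Ici.mpr ht.le) ht
  simpa using h

theorem stmt_3 (x₀ δ : ℝ) (h0 : 0 < x₀) (h1 : x₀ < 1/2) (h2 : x₀ < δ) (h3 : δ < 1 - x₀) :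
    2 * (1 - x₀ - δ) < Real.log ((1 - δ) / x₀) := by
  have ha : x₀ < 1 - δ := by linarith
  have ht : 1 < (1 - δ) / x₀ := (one_lt_div h0).mpr ha
  have key := log_gt_tanh_bound ht
  have htp : (0:ℝ) < (1 - δ) / x₀ + 1 := by linarith
  have heq : 2 * ((1 - δ) / x₀ - 1) / ((1 - δ) / x₀ + 1) = 2 * (1 - δ - x₀) / (1 - δ + x₀) := by
    field_simp
  rw [heq] at key
  have hlt : 2 * (1 - x₀ - δ) < 2 * (1 - δ - x₀) / (1 - δ + x₀) := by
    rw [lt_div_iff₀ (by linarith)]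
    nlinarith
  linarith
end
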